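/- Let q be even, ξ ∈ GF(q^2)\GF(q), σ ∈ GF(q)\{0}. The element A=[[1,0,σb,b^2],[0,1,0,b],[0,0,1,0],[0,0,0,1]] of G maps the point (ν, 0, ξ, σξ^{q+1}) (ν ∈ GF(q)) to a point on the line joining (1,ξ,0,0) and (ν,0,ξ,σξ^{q+1}) if and only if b=0 or b=(ξ+ξ^q)/ξ^{q+1}. -/

import Mathlib

/-!
Applying `A` to `(ν, 0, ξ, σξ^{q+1})` gives `(ν + σbξ + b²σξ^{q+1}, bσξ^{q+1}, ξ, σξ^{q+1})`.
Since the third coordinate is still `ξ ≠ 0`, this lies on the line through `(1, ξ, 0, 0)` and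
`(ν, 0, ξ, σξ^{q+1})` exactly when it is `α (1, ξ, 0, 0) + (ν, 0, ξ, σξ^{q+1})`, i.e. when
`bσξ^{q+1} = ξ (σbξ + b²σξ^{q+1})`. This factors as `σbξ (ξ + bξ^{q+1} - ξ^q) = 0`, and in
characteristic two `ξ^q - ξ = ξ + ξ^q`.
-/

def phiMat {F : Type*} [CommRing F] (σ a b c d : F) : Matrix (Fin 4) (Fin 4) F :=
  !![a^2, 0, σ*a*b, b^2;
     a*c, 1, σ*b*c, b*d;
     0,   0, 1,     0;
     c^2, 0, σ*c*d, d^2]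

theorem phiMat_map {R S : Type*} [CommRing R] [CommRing S] (f : R →+* S) (σ a b c d : R) :
    (phiMat σ a b c d).map f = phiMat (f σ) (f a) (f b) (f c) (f d) := by
  ext i j
  fin_cases i <;> fin_cases j <;> simp [phiMat]

theorem phiMat_one_zero_one_mulVec {R : Type*} [CommRing R] (σ b x y z w : R) :
    (phiMat σ 1 b 0 1).mulVec ![x, y, z, w] = ![x + σ * b * z + b ^ 2 * w, y + b * w, z, w] := by
  ext i
  fin_cases i <;> simp [phiMat, Matrix.mulVec, dotProduct, Fin.sum_univ_four]

theorem mem_span_pair_iff_of_ne_zero {K : Type*} [Field K] {ξ : K} (hξ : ξ ≠ 0) (ν w x y : K) :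
    ![x, y, ξ, w] ∈ Submodule.span K {![1, ξ, 0, 0], ![ν, 0, ξ, w]} ↔ ξ * (x - ν) = y := by
  rw [Submodule.mem_span_pair]
  constructor
  · rintro ⟨α, β, hαβ⟩
    have h₀ := congrFun hαβ 0
    have h₁ := congrFun hαβ 1
    have h₂ := congrFun hαβ 2
    simp only [Pi.add_apply, Pi.smul_apply, smul_eq_mul, Matrix.cons_val] at h₀ h₁ h₂
    have hβ : β = 1 := mul_right_cancel₀ hξ (by linear_combination h₂)
    subst hβ
    linear_combination h₁ - ξ * h₀
  · intro h
    refine ⟨x - ν, 1, ?_⟩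
    ext i
    fin_cases i <;> simp [← h, mul_comm]

theorem mul_add_pow_eq_iff_eq_zero_or_eq_div {K : Type*} [Field K] [CharP K 2] {σ ξ : K}
    (hσ : σ ≠ 0) (hξ : ξ ≠ 0) (n : ℕ) (b : K) :
    ξ * (σ * b * ξ + b ^ 2 * (σ * ξ ^ (n + 1))) = b * (σ * ξ ^ (n + 1)) ↔
      b = 0 ∨ b = (ξ + ξ ^ n) / ξ ^ (n + 1) := by
  have hfactor : ξ * (σ * b * ξ + b ^ 2 * (σ * ξ ^ (n + 1))) - b * (σ * ξ ^ (n + 1)) =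
      b * (σ * ξ * (b * ξ ^ (n + 1) - (ξ ^ n - ξ))) := by ring
  rw [← sub_eq_zero, hfactor, mul_eq_zero, mul_eq_zero, or_iff_right (mul_ne_zero hσ hξ),
    sub_eq_zero, CharTwo.sub_eq_add, add_comm (ξ ^ n), eq_div_iff (pow_ne_zero _ hξ)]

theorem stmt8_general (q : ℕ) (F K : Type) [Field F] [Field K] [Algebra F K]
    (hchar : ringChar F = 2)
    (σ : F) (hσ : σ ≠ 0) (ξ : K) (hξ : ξ ∉ Set.range (algebraMap F K))
    (ν b : F) :
    (((phiMat σ 1 b 0 1).map (algebraMap F K)).mulVec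
        ![algebraMap F K ν, 0, ξ, (algebraMap F K σ) * ξ^(q+1)] ∈
      Submodule.span K
        ({![1, ξ, 0, 0],
          ![algebraMap F K ν, 0, ξ, (algebraMap F K σ) * ξ^(q+1)]} : Set (Fin 4 → K))) ↔
      (b = 0 ∨ algebraMap F K b = (ξ + ξ^q) / ξ^(q+1)) := by
  have : CharP K 2 := (Algebra.charP_iff F K 2).mp (ringChar.of_eq hchar)
  have hξ0 : ξ ≠ 0 := fun h => hξ ⟨0, by rw [h, map_zero]⟩
  have hσ' : algebraMap F K σ ≠ 0 := (map_ne_zero _).mpr hσ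
  rw [phiMat_map, map_one, map_zero, phiMat_one_zero_one_mulVec, zero_add,
    mem_span_pair_iff_of_ne_zero hξ0, add_assoc, add_sub_cancel_left,
    mul_add_pow_eq_iff_eq_zero_or_eq_div hσ' hξ0, map_eq_zero]

theorem stmt8 (q : ℕ) (F K : Type) [Field F] [Fintype F] [Field K] [Fintype K] [Algebra F K]
    (hq : Fintype.card F = q) (hchar : ringChar F = 2) (hK : Fintype.card K = q^2)
    (σ : F) (hσ : σ ≠ 0) (ξ : K) (hξ : ξ ∉ Set.range (algebraMap F K))
    (ν b : F) :
    (((phiMat σ 1 b 0 1).map (algebraMap F K)).mulVec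
        ![algebraMap F K ν, 0, ξ, (algebraMap F K σ) * ξ^(q+1)] ∈
      Submodule.span K
        ({![1, ξ, 0, 0],
          ![algebraMap F K ν, 0, ξ, (algebraMap F K σ) * ξ^(q+1)]} : Set (Fin 4 → K))) ↔
      (b = 0 ∨ algebraMap F K b = (ξ + ξ^q) / ξ^(q+1)) :=
  stmt8_general q F K hchar σ hσ ξ hξ ν b
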